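/- arXiv:1705.03637 — 4 statements merged into one kernel-verified Lean document; each statement's English description precedes it below -/
import Mathlib

section
/- Let T be a DFS tree of a finite connected simple graph G rooted at r, let r' be any vertex, and let P be the vertex set of the tree path from r to r' (i.e., the set of ancestors of r'). Then the connected components of the induced subgraph of G on V \ P are exactly the sets T(w) over the vertices w with w ∉ P and the parent of w in P (the subtrees of T hanging from P). -/
/-- `u` is an ancestor of `v` in the tree `T` rooted at `r`:
`u` lies on the (unique) path in `T` from `r` to `v`. -/
def IsAncestor {V : Type*} (T : SimpleGraph V) (r u v : V) : Prop :=
  ∀ p : T.Walk r v, p.IsPath → u ∈ p.support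

/-- `T(v)`: the set of descendants of `v` in the tree `T` rooted at `r`. -/
def descendants {V : Type*} (T : SimpleGraph V) (r v : V) : Set V :=
  {w | IsAncestor T r v w}

/-- `T` is a DFS tree of `G` rooted at `r`: a spanning tree of `G` such that every edge of `G`
joins two vertices one of which is an ancestor of the other in `T`. -/
def IsDFSTree {V : Type*} (G T : SimpleGraph V) (r : V) : Prop :=
  T ≤ G ∧ T.IsTree ∧
    ∀ u v : V, G.Adj u v → IsAncestor T r u v ∨ IsAncestor T r v u

/-- `S` is a connected component of the subgraph of `G` induced on the vertex set `A`:
`S` is a nonempty subset of `A`, the induced subgraph on `S` is connected, and no edge of `G`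
joins `S` to `A \ S`. -/
def IsComponentOf {V : Type*} (G : SimpleGraph V) (A S : Set V) : Prop :=
  S ⊆ A ∧ S.Nonempty ∧ (SimpleGraph.induce S G).Connected ∧
    ∀ a ∈ S, ∀ b ∈ A, b ∉ S → ¬ G.Adj a b

/-- The subtree `T(w)` hangs from the vertex set `P`: `w ∉ P` and the parent of `w`
(the neighbor of `w` in `T` that is an ancestor of `w`) lies in `P`. -/
def HangsFrom {V : Type*} (T : SimpleGraph V) (r : V) (P : Set V) (w : V) : Prop :=
  w ∉ P ∧ ∃ u ∈ P, T.Adj u w ∧ IsAncestor T r u w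

/-!
By the DFS property, an edge of `G` leaving a hanging subtree `T(w)` ends at a proper ancestor
of `w`, that is, at an ancestor of the parent of `w`, which lies in `P`. So `T(w)` is closed in
`G - P`, and it is connected through its tree paths. Conversely, a vertex `v ∉ P` lies in the
subtree hanging at the first vertex off `P` on the tree path from `r` to `v`.
-/

section

open SimpleGraph Walk

variable {V : Type*} {G T : SimpleGraph V} {r u v w : V}

lemma SimpleGraph.IsAcyclic.eq_of_isPath (hT : T.IsAcyclic) {p q : T.Walk u v}
    (hp : p.IsPath) (hq : q.IsPath) : p = q :=
  congrArg Subtype.val ((hT.subsingleton_path u v).elim ⟨p, hp⟩ ⟨q, hq⟩)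

lemma isAncestor_refl (T : SimpleGraph V) (r v : V) : IsAncestor T r v v :=
  fun p _ => p.end_mem_support

lemma isAncestor_root (T : SimpleGraph V) (r v : V) : IsAncestor T r r v :=
  fun p _ => p.start_mem_support

lemma isAncestor_iff_mem_support (hT : T.IsAcyclic) {p : T.Walk r v} (hp : p.IsPath) :
    IsAncestor T r u v ↔ u ∈ p.support :=
  ⟨fun h => h p hp, fun h q hq => by rwa [hT.eq_of_isPath hq hp]⟩

lemma isAncestor_iff_support_prefix (hT : T.IsAcyclic) {p : T.Walk r u} {q : T.Walk r v}
    (hp : p.IsPath) (hq : q.IsPath) : IsAncestor T r u v ↔ p.support <+: q.support := by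
  classical
  refine ⟨fun h => ?_, fun h =>
    (isAncestor_iff_mem_support hT hq).2 (h.subset p.end_mem_support)⟩
  have hu := h q hq
  rw [hT.eq_of_isPath hp (hq.takeUntil hu)]
  exact q.support_takeUntil_prefix_support hu

lemma IsAncestor.trans (h₁ : IsAncestor T r u v) (h₂ : IsAncestor T r v w) :
    IsAncestor T r u w := by
  classical
  intro p hp
  have hv := h₂ p hp
  exact p.support_takeUntil_subset_support hv (h₁ _ (hp.takeUntil hv))

lemma IsAncestor.antisymm (hT : T.IsTree) (h₁ : IsAncestor T r u v) (h₂ : IsAncestor T r v u) :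
    u = v := by
  obtain ⟨p, hp, -⟩ := hT.existsUnique_path r u
  obtain ⟨q, hq, -⟩ := hT.existsUnique_path r v
  have hpq := (isAncestor_iff_support_prefix hT.isAcyclic hp hq).1 h₁
  have hqp := (isAncestor_iff_support_prefix hT.isAcyclic hq hp).1 h₂
  have hsupp := hpq.eq_of_length_le hqp.length_le
  have hlast := congrArg List.getLast? hsupp
  rwa [List.getLast?_eq_some_getLast p.support_ne_nil,
    List.getLast?_eq_some_getLast q.support_ne_nil, getLast_support, getLast_support,
    Option.some_inj] at hlast

lemma IsAncestor.total (hT : T.IsTree) (hu : IsAncestor T r u w) (hv : IsAncestor T r v w) :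
    IsAncestor T r u v ∨ IsAncestor T r v u := by
  obtain ⟨p, hp, -⟩ := hT.existsUnique_path r u
  obtain ⟨q, hq, -⟩ := hT.existsUnique_path r v
  obtain ⟨s, hs, -⟩ := hT.existsUnique_path r w
  simp only [isAncestor_iff_support_prefix hT.isAcyclic hp hq,
    isAncestor_iff_support_prefix hT.isAcyclic hq hp]
  exact List.prefix_or_prefix_of_prefix
    ((isAncestor_iff_support_prefix hT.isAcyclic hp hs).1 hu)
    ((isAncestor_iff_support_prefix hT.isAcyclic hq hs).1 hv)

lemma IsAncestor.isAncestor_parent (hT : T.IsTree) {b : V} (hb : IsAncestor T r b w)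
    (hbw : b ≠ w) (hadj : T.Adj u w) (huw : IsAncestor T r u w) : IsAncestor T r b u := by
  obtain ⟨q, hq, -⟩ := hT.existsUnique_path r u
  have hwq : w ∉ q.support := fun hw =>
    hadj.ne (((isAncestor_iff_mem_support hT.isAcyclic hq).2 hw).antisymm hT huw).symm
  have hbq := hb _ (hq.concat hwq hadj)
  simp only [support_concat, List.mem_append, List.mem_singleton, hbw, or_false] at hbq
  exact (isAncestor_iff_mem_support hT.isAcyclic hq).2 hbq

lemma isAncestor_of_mem_support_dropUntil [DecidableEq V] (hT : T.IsAcyclic) {p : T.Walk r v}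
    (hp : p.IsPath) (hw : w ∈ p.support) {x : V} (hx : x ∈ (p.dropUntil w hw).support) :
    IsAncestor T r w x := by
  set q := p.dropUntil w hw
  have hsplit : ((p.takeUntil w hw).append (q.takeUntil x hx)).append (q.dropUntil x hx) = p := by
    rw [← append_assoc, take_spec, take_spec]
  have hpath : ((p.takeUntil w hw).append (q.takeUntil x hx)).IsPath := by
    rw [← hsplit] at hp
    exact hp.of_append_left
  exact (isAncestor_iff_mem_support hT hpath).2
    ((mem_support_append_iff _ _).2 (Or.inl (end_mem_support _)))

lemma connected_induce_descendants (hTG : T ≤ G) (hT : T.IsTree) (w : V) :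
    (G.induce (descendants T r w)).Connected := by
  classical
  rw [connected_iff_exists_forall_reachable]
  refine ⟨⟨w, isAncestor_refl T r w⟩, fun ⟨a, ha⟩ => ?_⟩
  obtain ⟨p, hp, -⟩ := hT.existsUnique_path r a
  have hw : w ∈ p.support := ha p hp
  refine ⟨((p.dropUntil w hw).mapLe hTG).induce _ fun x hx => ?_⟩
  rw [support_mapLe_eq_support] at hx
  exact isAncestor_of_mem_support_dropUntil hT.isAcyclic hp hw hx

lemma IsComponentOf.subset_of_mem {A S₁ S₂ : Set V} {x : V} (h₁ : IsComponentOf G A S₁)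
    (h₂ : IsComponentOf G A S₂) (hx₁ : x ∈ S₁) (hx₂ : x ∈ S₂) : S₁ ⊆ S₂ := by
  intro y hy
  by_contra hy₂
  obtain ⟨hsub, -, hconn, -⟩ := h₁
  obtain ⟨p⟩ := hconn.preconnected ⟨x, hx₁⟩ ⟨y, hy⟩
  obtain ⟨d, hd, hd₁, hd₂⟩ :=
    (p.map (Embedding.induce S₁).toHom).exists_boundary_dart S₂ hx₂ hy₂
  have hdS₁ : d.snd ∈ S₁ := by
    have hmem := dart_snd_mem_support_of_mem_darts _ hd
    rw [Walk.support_map] at hmem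
    obtain ⟨z, -, hz⟩ := List.mem_map.1 hmem
    exact hz ▸ z.2
  exact h₂.2.2.2 _ hd₁ _ (hsub hdS₁) hd₂ d.adj

lemma IsComponentOf.eq_of_mem {A S₁ S₂ : Set V} {x : V} (h₁ : IsComponentOf G A S₁)
    (h₂ : IsComponentOf G A S₂) (hx₁ : x ∈ S₁) (hx₂ : x ∈ S₂) : S₁ = S₂ :=
  (h₁.subset_of_mem h₂ hx₁ hx₂).antisymm (h₂.subset_of_mem h₁ hx₂ hx₁)

lemma isComponentOf_descendants {r' : V} (hDFS : IsDFSTree G T r)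
    (hw : HangsFrom T r {u | IsAncestor T r u r'} w) :
    IsComponentOf G {u | IsAncestor T r u r'}ᶜ (descendants T r w) := by
  obtain ⟨hTG, hT, hanc⟩ := hDFS
  obtain ⟨hwP, u, huP, hadj, huw⟩ := hw
  refine ⟨fun v hv hvP => hwP (IsAncestor.trans hv hvP), ⟨w, isAncestor_refl T r w⟩,
    connected_induce_descendants hTG hT w, ?_⟩
  rintro a (ha : IsAncestor T r w a) b hbP hbT hGab
  rcases hanc a b hGab with hab | hba
  · exact hbT (ha.trans hab)
  rcases hba.total hT ha with hbw | hwb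
  · have hne : b ≠ w := fun h => hbT (h ▸ isAncestor_refl T r w)
    exact hbP ((hbw.isAncestor_parent hT hne hadj huw).trans huP)
  · exact hbT hwb

lemma exists_hangsFrom_isAncestor {r' : V} (hT : T.IsTree)
    (hv : v ∉ {u | IsAncestor T r u r'}) :
    ∃ w, HangsFrom T r {u | IsAncestor T r u r'} w ∧ IsAncestor T r w v := by
  obtain ⟨p, hp, -⟩ := hT.existsUnique_path r v
  obtain ⟨d, hd, hxP, hwP⟩ := p.exists_boundary_dart _ (isAncestor_root T r r') hv
  have hx := (isAncestor_iff_mem_support hT.isAcyclic hp).2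
    (p.dart_fst_mem_support_of_mem_darts hd)
  have hw := (isAncestor_iff_mem_support hT.isAcyclic hp).2
    (p.dart_snd_mem_support_of_mem_darts hd)
  refine ⟨d.snd, ⟨hwP, d.fst, hxP, d.adj, ?_⟩, hw⟩
  exact (hx.total hT hw).resolve_right fun hwx => hwP (hwx.trans hxP)

end

theorem components_of_unvisited_general {V : Type*} (G T : SimpleGraph V) (r : V)
    (hDFS : IsDFSTree G T r) (r' : V)
    (P : Set V) (hP : P = {u | IsAncestor T r u r'}) :
    ∀ S : Set V, IsComponentOf G Pᶜ S ↔
      ∃ w, HangsFrom T r P w ∧ S = descendants T r w := by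
  subst hP
  intro S
  constructor
  · intro hS
    obtain ⟨v, hv⟩ := hS.2.1
    obtain ⟨w, hw, hwv⟩ := exists_hangsFrom_isAncestor hDFS.2.1 (hS.1 hv)
    exact ⟨w, hw, hS.eq_of_mem (isComponentOf_descendants hDFS hw) hv hwv⟩
  · rintro ⟨w, hw, rfl⟩
    exact isComponentOf_descendants hDFS hw

/-- Components property: if `T` is a DFS tree of a connected graph `G` rooted at `r` and
`P` is the set of vertices of the tree path from `r` to `r'` (the ancestors of `r'`), then the
connected components of the subgraph of `G` induced on `V \ P` are exactly the sets `T(w)`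
over the subtrees `T(w)` hanging from `P`. -/
theorem components_of_unvisited {V : Type*} [Fintype V] (G T : SimpleGraph V) (r : V)
    (hG : G.Connected) (hDFS : IsDFSTree G T r) (r' : V)
    (P : Set V) (hP : P = {u | IsAncestor T r u r'}) :
    ∀ S : Set V, IsComponentOf G Pᶜ S ↔
      ∃ w, HangsFrom T r P w ∧ S = descendants T r w :=
  components_of_unvisited_general G T r hDFS r' P hP
end

section
/- Let G be a finite simple graph, let u_0, u_1, …, u_{L−1} be L distinct vertices forming a path in G, and let S be a set of vertices disjoint from {u_0, …, u_{L−1}}. Let I = {i : some vertex of S is adjacent in G to u_i}, and suppose I is nonempty. Define j and q as follows: if I contains some index i < ⌈L/2⌉ (an edge from S lands on the upper half of the path), let j = min I and q = {u_j, u_{j+1}, …, u_{L−1}}; otherwise let j = max I and q = {u_0, u_1, …, u_j}. Then every index i ∈ I satisfies u_i ∈ q, and the number of path vertices outside q is at most ⌊L/2⌋. (Thus, entering the path at u_j and traversing toward the farther endpoint covers all endpoints of edges from S and leaves an untraversed subpath of at most half the length.) -/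
/-- Path halving: let `u 0, …, u (L-1)` be a path in `G` and `S` a vertex set disjoint from
the path. Let `I` be the set of indices `i` such that some vertex of `S` is adjacent to `u i`,
and suppose `I ≠ ∅`. If some `i ∈ I` satisfies `i < ⌈L/2⌉` (an edge from `S` lands on the
upper half), let `j = min I` and `q = {u j, …, u (L-1)}`; otherwise let `j = max I` and
`q = {u 0, …, u j}`. Then every `i ∈ I` has `u i ∈ q`, and the number of path vertices
outside `q` is at most `⌊L/2⌋`. -/
theorem path_halving {V : Type*} [Fintype V] (G : SimpleGraph V) (L : ℕ)
    (u : Fin L → V) (hu : Function.Injective u)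
    (hpath : ∀ (i : ℕ) (h : i + 1 < L),
      G.Adj (u ⟨i, Nat.lt_of_succ_lt h⟩) (u ⟨i + 1, h⟩))
    (S : Set V) (hdisj : Disjoint S (Set.range u))
    (I : Set (Fin L)) (hI : I = {i | ∃ s ∈ S, G.Adj s (u i)}) (hne : I.Nonempty)
    (j : Fin L) (q : Set V)
    (hjq : ((∃ i ∈ I, (i : ℕ) < (L + 1) / 2) ∧
              j ∈ I ∧ (∀ i ∈ I, j ≤ i) ∧ q = {x | ∃ i : Fin L, j ≤ i ∧ x = u i}) ∨
           ((¬ ∃ i ∈ I, (i : ℕ) < (L + 1) / 2) ∧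
              j ∈ I ∧ (∀ i ∈ I, i ≤ j) ∧ q = {x | ∃ i : Fin L, i ≤ j ∧ x = u i})) :
    (∀ i ∈ I, u i ∈ q) ∧ (Set.range u \ q).ncard ≤ L / 2 := by
  rcases hjq with ⟨⟨i0, hi0I, hi0⟩, hjI, hmin, hq⟩ | ⟨hno, hjI, hmax, hq⟩
  · refine ⟨fun i hi => hq ▸ ⟨i, hmin i hi, rfl⟩, ?_⟩
    have hsub : Set.range u \ q ⊆ u '' ↑(Finset.Iio j) := by
      rintro x ⟨⟨i, rfl⟩, hx⟩
      refine ⟨i, Finset.mem_coe.2 (Finset.mem_Iio.2 ?_), rfl⟩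
      by_contra h
      exact hx (hq ▸ ⟨i, not_lt.mp h, rfl⟩)
    calc (Set.range u \ q).ncard ≤ (u '' ↑(Finset.Iio j)).ncard :=
          Set.ncard_le_ncard hsub (Set.toFinite _)
      _ = (↑(Finset.Iio j) : Set (Fin L)).ncard := Set.ncard_image_of_injective _ hu
      _ = (Finset.Iio j).card := Set.ncard_coe_finset _
      _ = (j : ℕ) := by simp
      _ ≤ L / 2 := by have hji := hmin i0 hi0I; have : (j:ℕ) ≤ (i0:ℕ) := hji; omega
  · refine ⟨fun i hi => hq ▸ ⟨i, hmax i hi, rfl⟩, ?_⟩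
    have hsub : Set.range u \ q ⊆ u '' ↑(Finset.Ioi j) := by
      rintro x ⟨⟨i, rfl⟩, hx⟩
      refine ⟨i, Finset.mem_coe.2 (Finset.mem_Ioi.2 ?_), rfl⟩
      by_contra h
      exact hx (hq ▸ ⟨i, not_lt.mp h, rfl⟩)
    calc (Set.range u \ q).ncard ≤ (u '' ↑(Finset.Ioi j)).ncard :=
          Set.ncard_le_ncard hsub (Set.toFinite _)
      _ = (↑(Finset.Ioi j) : Set (Fin L)).ncard := Set.ncard_image_of_injective _ hu
      _ = (Finset.Ioi j).card := Set.ncard_coe_finset _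
      _ = L - 1 - (j : ℕ) := by simp
      _ ≤ L / 2 := by push_neg at hno; have := hno j hjI; omega
end

section
/- Let T be a DFS tree of a finite simple graph G rooted at r. Let u, x, y be vertices such that x is an ancestor of both u and y, and no vertex of path(x,y) is a strict descendant of u. Let l be the lowest common ancestor of u and y in T. Then every vertex of path(x,y) that is adjacent to u in G is an ancestor of u and belongs to path(x,l); moreover, every vertex of path(x,l) is an ancestor of u. (This justifies answering Query(u, path(x,y)) by a binary search over the neighbors of u restricted to the range corresponding to path(x, LCA(u,y)).) -/
/-- `l` is the lowest common ancestor of `u` and `v` in the tree `T` rooted at `r`. -/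
def IsLCA {V : Type*} (T : SimpleGraph V) (r u v l : V) : Prop :=
  IsAncestor T r l u ∧ IsAncestor T r l v ∧
    ∀ z, IsAncestor T r z u → IsAncestor T r z v → IsAncestor T r z l

/-- `path(x,y)` for `x` an ancestor of `y`: the set of vertices `z` such that `x` is an
ancestor of `z` and `z` is an ancestor of `y`. -/
def tpath {V : Type*} (T : SimpleGraph V) (r x y : V) : Set V :=
  {z | IsAncestor T r x z ∧ IsAncestor T r z y}

lemma IsAncestor.refl' {V : Type*} (T : SimpleGraph V) (r u : V) : IsAncestor T r u u :=
  fun p _ => p.end_mem_support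

lemma IsAncestor.trans' {V : Type*} (T : SimpleGraph V) (r a b c : V)
    (hab : IsAncestor T r a b) (hbc : IsAncestor T r b c) : IsAncestor T r a c := by
  classical
  intro p hp
  have hb : b ∈ p.support := hbc p hp
  have ha : a ∈ (p.takeUntil b hb).support := hab _ (hp.takeUntil hb)
  exact p.support_takeUntil_subset hb ha

/-- Let `T` be a DFS tree of `G` rooted at `r`, let `x` be an ancestor of both `u` and `y`,
suppose no vertex of `path(x,y)` is a strict descendant of `u`, and let `l = LCA(u,y)`.
Then every vertex of `path(x,y)` adjacent to `u` in `G` is an ancestor of `u` and lies on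
`path(x,l)`; moreover every vertex of `path(x,l)` is an ancestor of `u`. -/
theorem query_restricted_range {V : Type*} [Fintype V] (G T : SimpleGraph V) (r : V)
    (hDFS : IsDFSTree G T r) (u x y l : V)
    (hxu : IsAncestor T r x u) (hxy : IsAncestor T r x y)
    (hnd : ∀ z ∈ tpath T r x y, ¬ (IsAncestor T r u z ∧ z ≠ u))
    (hlca : IsLCA T r u y l) :
    (∀ z ∈ tpath T r x y, G.Adj u z →
        IsAncestor T r z u ∧ z ∈ tpath T r x l) ∧
    (∀ z ∈ tpath T r x l, IsAncestor T r z u) := by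
  have key : ∀ z ∈ tpath T r x y, G.Adj u z → IsAncestor T r z u ∧ z ∈ tpath T r x l := by
    intro z hz hadj
    have hzu : IsAncestor T r z u := by
      rcases hDFS.2.2 u z hadj with h | h
      · by_cases hzu : z = u
        · subst hzu; exact IsAncestor.refl' T r z
        · exact absurd ⟨h, hzu⟩ (hnd z hz)
      · exact h
    refine ⟨hzu, hz.1, hlca.2.2 z hzu hz.2⟩
  refine ⟨key, fun z hz => IsAncestor.trans' T r z l u hz.2 hlca.1⟩
end

section
/- A single vertex insertion can force Ω(n) changes in any DFS tree: for every n ≥ 2, let G_n be the tree (spider) with vertex set {r} ∪ {a_1, …, a_n} ∪ {b_1, …, b_n} and edges {r, a_i} and {a_i, b_i} for 1 ≤ i ≤ n, so that G_n is its own unique spanning tree T_n and T_n is a DFS tree of G_n rooted at r. Let G_n' be obtained from G_n by inserting a single new vertex u adjacent to b_1, …, b_n. Then every DFS tree T' of G_n' rooted at r contains at most one of the n edges {r, a_i}; consequently, T' omits at least n − 1 edges of T_n. -/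
/-- The vertex set of the spider with center `r`, middle vertices `a 1, …, a n`, leaves
`b 1, …, b n`, together with the new vertex `u`. -/
abbrev SpiderV (n : ℕ) := Sum Unit (Sum (Fin n) (Sum (Fin n) Unit))

/-- The root `r`. -/
def rv (n : ℕ) : SpiderV n := Sum.inl ()

/-- The middle vertex `a i`. -/
def av (n : ℕ) (i : Fin n) : SpiderV n := Sum.inr (Sum.inl i)

/-- The leaf `b i`. -/
def bv (n : ℕ) (i : Fin n) : SpiderV n := Sum.inr (Sum.inr (Sum.inl i))

/-- The newly inserted vertex `u`. -/
def uv (n : ℕ) : SpiderV n := Sum.inr (Sum.inr (Sum.inr ()))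

/-- `G_n'`: the spider `G_n` with edges `{r, a i}` and `{a i, b i}` for `1 ≤ i ≤ n`, after
inserting the single new vertex `u` adjacent to `b 1, …, b n`. -/
def SpiderG' (n : ℕ) : SimpleGraph (SpiderV n) :=
  SimpleGraph.fromRel (fun x y =>
    (∃ i : Fin n, x = rv n ∧ y = av n i) ∨
    (∃ i : Fin n, x = av n i ∧ y = bv n i) ∨
    (∃ i : Fin n, x = bv n i ∧ y = uv n))

/-!
If `T'` uses the edge `{r, a i}`, the DFS condition on `{a i, b i}` forces `a i` to be an
ancestor of `b i` (the tree path to `a i` is just `r, a i`), so the tree path to `b i` starts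
`r, a i`. The DFS condition on `{b i, u}` makes the tree paths to `b i` and to `u` comparable
under prefix, and as `u ≠ r` the tree path to `u` starts `r, a i` as well. Its second vertex
determines `i`.
-/

open SimpleGraph

lemma SimpleGraph.IsAcyclic.support_isPrefix_of_isAncestor {V : Type*} {T : SimpleGraph V}
    (hT : T.IsAcyclic) {r u v : V} (h : IsAncestor T r u v) {p : T.Walk r u} (hp : p.IsPath)
    {q : T.Walk r v} (hq : q.IsPath) : p.support <+: q.support := by
  classical
  have hu : u ∈ q.support := h q hq
  have htake : q.takeUntil u hu = p :=
    congrArg Subtype.val ((hT.subsingleton_path r u).elim ⟨_, hq.takeUntil hu⟩ ⟨p, hp⟩)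
  have hsupp := congrArg Walk.support (q.take_spec hu)
  rw [Walk.support_append, htake] at hsupp
  rw [← hsupp]
  exact List.prefix_append _ _

section Spider

variable {n : ℕ} {T' : SimpleGraph (SpiderV n)}

lemma spiderG'_adj_av_bv (i : Fin n) : (SpiderG' n).Adj (av n i) (bv n i) := by
  rw [SpiderG', fromRel_adj]
  exact ⟨by simp [av, bv], Or.inl (Or.inr (Or.inl ⟨i, rfl, rfl⟩))⟩

lemma spiderG'_adj_bv_uv (i : Fin n) : (SpiderG' n).Adj (bv n i) (uv n) := by
  rw [SpiderG', fromRel_adj]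
  exact ⟨by simp [bv, uv], Or.inl (Or.inr (Or.inr ⟨i, rfl, rfl⟩))⟩

lemma isAncestor_av_bv_of_adj
    (hdfs : ∀ x y : SpiderV n, (SpiderG' n).Adj x y →
      IsAncestor T' (rv n) x y ∨ IsAncestor T' (rv n) y x)
    {i : Fin n} (h : T'.Adj (rv n) (av n i)) : IsAncestor T' (rv n) (av n i) (bv n i) := by
  refine (hdfs _ _ (spiderG'_adj_av_bv i)).resolve_right fun hb => ?_
  have := hb (.cons h .nil) (Path.singleton h).property
  rw [Walk.support_cons, Walk.support_nil] at this
  simp [rv, av, bv] at this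

lemma support_path_to_uv_prefix_of_adj (hT : T'.IsTree)
    (hdfs : ∀ x y : SpiderV n, (SpiderG' n).Adj x y →
      IsAncestor T' (rv n) x y ∨ IsAncestor T' (rv n) y x)
    {q : T'.Walk (rv n) (uv n)} (hq : q.IsPath) {i : Fin n} (h : T'.Adj (rv n) (av n i)) :
    [rv n, av n i] <+: q.support := by
  obtain ⟨qb, hqb, -⟩ := hT.existsUnique_path (rv n) (bv n i)
  have hab : [rv n, av n i] <+: qb.support :=
    hT.isAcyclic.support_isPrefix_of_isAncestor (isAncestor_av_bv_of_adj hdfs h)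
      (Path.singleton h).property hqb
  rcases hdfs _ _ (spiderG'_adj_bv_uv i) with hbu | hub
  · exact hab.trans (hT.isAcyclic.support_isPrefix_of_isAncestor hbu hqb hq)
  · have hlen : 2 ≤ q.support.length := by
      have : q.length ≠ 0 := fun h0 => by
        simpa [rv, uv] using Walk.eq_of_length_eq_zero h0
      rw [Walk.length_support]
      omega
    exact List.prefix_of_prefix_length_le hab
      (hT.isAcyclic.support_isPrefix_of_isAncestor hub hq hqb) hlen

lemma subsingleton_setOf_adj_rv_av (hT : T'.IsTree)
    (hdfs : ∀ x y : SpiderV n, (SpiderG' n).Adj x y →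
      IsAncestor T' (rv n) x y ∨ IsAncestor T' (rv n) y x) :
    {i : Fin n | T'.Adj (rv n) (av n i)}.Subsingleton := by
  obtain ⟨q, hq, -⟩ := hT.existsUnique_path (rv n) (uv n)
  intro i hi j hj
  have hij : [rv n, av n i] = [rv n, av n j] :=
    (List.prefix_of_prefix_length_le (support_path_to_uv_prefix_of_adj hT hdfs hq hi)
      (support_path_to_uv_prefix_of_adj hT hdfs hq hj) le_rfl).eq_of_length rfl
  simpa [av] using hij

end Spider

theorem spider_insertion_forces_changes_general (n : ℕ)
    (T' : SimpleGraph (SpiderV n)) (htree : T'.IsTree)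
    (hdfs : ∀ x y : SpiderV n, (SpiderG' n).Adj x y →
      IsAncestor T' (rv n) x y ∨ IsAncestor T' (rv n) y x) :
    {i : Fin n | T'.Adj (rv n) (av n i)}.ncard ≤ 1 ∧
    n - 1 ≤ {i : Fin n | ¬ T'.Adj (rv n) (av n i)}.ncard := by
  have hle_one : {i : Fin n | T'.Adj (rv n) (av n i)}.ncard ≤ 1 :=
    Set.ncard_le_one_iff_subsingleton.mpr (subsingleton_setOf_adj_rv_av htree hdfs)
  have hsum := Set.ncard_add_ncard_compl {i : Fin n | T'.Adj (rv n) (av n i)}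
  rw [Nat.card_eq_fintype_card, Fintype.card_fin, Set.compl_ofPred] at hsum
  exact ⟨hle_one, by omega⟩

/-- A single vertex insertion can force `Ω(n)` changes in any DFS tree: for `n ≥ 2`, every
DFS tree `T'` of `G_n'` rooted at `r` contains at most one of the `n` edges `{r, a i}`;
consequently `T'` omits at least `n - 1` of these edges of the original (unique) DFS tree
`T_n = G_n`. -/
theorem spider_insertion_forces_changes (n : ℕ) (hn : 2 ≤ n)
    (T' : SimpleGraph (SpiderV n)) (hle : T' ≤ SpiderG' n) (htree : T'.IsTree)
    (hdfs : ∀ x y : SpiderV n, (SpiderG' n).Adj x y →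
      IsAncestor T' (rv n) x y ∨ IsAncestor T' (rv n) y x) :
    {i : Fin n | T'.Adj (rv n) (av n i)}.ncard ≤ 1 ∧
    n - 1 ≤ {i : Fin n | ¬ T'.Adj (rv n) (av n i)}.ncard :=
  spider_insertion_forces_changes_general n T' htree hdfs
end
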